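/- The multivariate skew-normal density integrates to 1: for any μ ∈ ℝ^p, positive definite Σ, λ ∈ ℝ^p, and λ₀ ∈ ℝ, the function f(x) = (1/Φ(λ₀/√(1+λᵀλ))) · φ_p(x; μ, Σ) · Φ(λ₀ + λᵀΣ^{-1/2}(x−μ)) is a probability density on ℝ^p. -/

import Mathlib

open MeasureTheory Matrix

noncomputable def stdNormalPDF (t : ℝ) : ℝ :=
  (Real.sqrt (2 * Real.pi))⁻¹ * Real.exp (-(t ^ 2) / 2)

noncomputable def stdNormalCDF (t : ℝ) : ℝ := ∫ y in Set.Iic t, stdNormalPDF y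

noncomputable def mvNormalPDF {p : ℕ} (μ : Fin p → ℝ) (Cov : Matrix (Fin p) (Fin p) ℝ)
    (x : Fin p → ℝ) : ℝ :=
  (Real.sqrt ((2 * Real.pi) ^ p * Cov.det))⁻¹ *
    Real.exp (-(1 / 2) * ((x - μ) ⬝ᵥ (Cov⁻¹ *ᵥ (x - μ))))

/-!
Write `Cov = S Sᵀ` and substitute `x = S z + μ`: the normal density becomes the standard one, so
`∫ φ_p(x; μ, Cov) Φ(λ₀ + λ ⬝ S⁻¹(x - μ)) dx = E[Φ(λ₀ + λ ⬝ Z)]` for a standard Gaussian vector `Z`.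
Here `λ ⬝ Z ~ N(0, |λ|²)` and `Φ(a + t) = P(Y ≤ a + t)` for an independent `Y ~ N(0, 1)`, so the
expectation is `P(Y - λ ⬝ Z ≤ λ₀) = Φ(λ₀ / √(1 + |λ|²))` because `Y - λ ⬝ Z ~ N(0, 1 + |λ|²)`.
-/

open ProbabilityTheory
open scoped NNReal

lemma stdNormalPDF_eq_gaussianPDFReal : stdNormalPDF = gaussianPDFReal 0 1 := by
  ext t
  simp [stdNormalPDF, gaussianPDFReal]

lemma stdNormalCDF_eq_gaussianReal_real_Iic (t : ℝ) :
    stdNormalCDF t = (gaussianReal 0 1).real (Set.Iic t) := by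
  rw [measureReal_def, gaussianReal_apply_eq_integral _ one_ne_zero, ENNReal.toReal_ofReal
    (setIntegral_nonneg measurableSet_Iic fun x _ => gaussianPDFReal_nonneg _ _ _),
    stdNormalCDF, stdNormalPDF_eq_gaussianPDFReal]

lemma stdNormalCDF_nonneg (t : ℝ) : 0 ≤ stdNormalCDF t := by
  rw [stdNormalCDF_eq_gaussianReal_real_Iic]
  exact measureReal_nonneg

lemma stdNormalCDF_pos (t : ℝ) : 0 < stdNormalCDF t := by
  rw [stdNormalCDF_eq_gaussianReal_real_Iic, measureReal_def]
  refine ENNReal.toReal_pos (fun h => ?_) (measure_ne_top _ _)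
  simpa using gaussianReal_absolutelyContinuous' 0 one_ne_zero h

lemma stdNormalCDF_monotone : Monotone stdNormalCDF := fun s t hst => by
  simp_rw [stdNormalCDF_eq_gaussianReal_real_Iic]
  exact measureReal_mono (Set.Iic_subset_Iic.2 hst)

lemma prod_stdNormalPDF {ι : Type*} [Fintype ι] (z : ι → ℝ) :
    ∏ i, stdNormalPDF (z i) =
      (Real.sqrt (2 * Real.pi) ^ Fintype.card ι)⁻¹ * Real.exp (-(1 / 2) * (z ⬝ᵥ z)) := by
  simp_rw [stdNormalPDF, Finset.prod_mul_distrib, ← Real.exp_sum, dotProduct, Finset.mul_sum,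
    Finset.prod_const, Finset.card_univ, inv_pow]
  congr 2
  exact Finset.sum_congr rfl fun i _ => by ring

section StandardGaussianVector

variable {ι : Type*} [Fintype ι]

lemma pi_gaussianReal_eq_withDensity :
    Measure.pi (fun _ : ι => gaussianReal 0 1) =
      volume.withDensity fun z => ∏ i, gaussianPDF 0 1 (z i) := by
  refine Measure.pi_eq fun s hs => ?_
  have hint : ∀ i, Integrable (gaussianPDFReal 0 1) (volume.restrict (s i)) :=
    fun i => (integrable_gaussianPDFReal 0 1).restrict
  simp_rw [withDensity_apply _ (MeasurableSet.univ_pi hs), volume_pi, Measure.restrict_pi_pi,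
    gaussianPDF, ← ENNReal.ofReal_prod_of_nonneg fun i _ => gaussianPDFReal_nonneg 0 1 _,
    gaussianReal_apply_eq_integral 0 one_ne_zero]
  rw [← ofReal_integral_eq_lintegral_ofReal (Integrable.fintype_prod_dep hint)
      (ae_of_all _ fun z => Finset.prod_nonneg fun i _ => gaussianPDFReal_nonneg 0 1 _),
    integral_fintype_prod_eq_prod (f := fun _ => gaussianPDFReal 0 1),
    ENNReal.ofReal_prod_of_nonneg fun i _ =>
      setIntegral_nonneg (hs i) fun _ _ => gaussianPDFReal_nonneg 0 1 _]

lemma integral_pi_gaussianReal {E : Type*} [NormedAddCommGroup E] [NormedSpace ℝ E]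
    (g : (ι → ℝ) → E) :
    ∫ z, g z ∂Measure.pi (fun _ : ι => gaussianReal 0 1) =
      ∫ z, (∏ i, stdNormalPDF (z i)) • g z := by
  rw [pi_gaussianReal_eq_withDensity, integral_withDensity_eq_integral_toReal_smul
    (by fun_prop) (ae_of_all _ fun z => ENNReal.prod_lt_top fun i _ => gaussianPDF_lt_top)]
  simp [ENNReal.toReal_prod, stdNormalPDF_eq_gaussianPDFReal]

open WithLp in
lemma map_dotProduct_pi_gaussianReal (v : ι → ℝ) :
    (Measure.pi fun _ : ι => gaussianReal 0 1).map (v ⬝ᵥ ·) =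
      gaussianReal 0 (v ⬝ᵥ v).toNNReal := by
  have hL : (fun z : ι → ℝ => v ⬝ᵥ z) = innerSL ℝ (toLp 2 v) ∘ toLp 2 := by
    ext z
    simp [dotProduct, PiLp.inner_apply, mul_comm]
  rw [hL, ← Measure.map_map (by fun_prop) (by fun_prop), map_pi_eq_stdGaussian,
    IsGaussian.map_eq_gaussianReal, integral_strongDual_stdGaussian, variance_dual_stdGaussian]
  congr
  rw [innerSL_apply_norm, EuclideanSpace.real_norm_sq_eq]
  simp [dotProduct, sq]

end StandardGaussianVector

lemma lintegral_gaussianReal_Iic_add (a : ℝ) (v : ℝ≥0) :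
    ∫⁻ t, gaussianReal 0 1 (Set.Iic (a + t)) ∂gaussianReal 0 v =
      gaussianReal 0 (1 + v) (Set.Iic a) := by
  calc ∫⁻ t, gaussianReal 0 1 (Set.Iic (a + t)) ∂gaussianReal 0 v
      = ∫⁻ t, gaussianReal 0 1 (Set.Iic (a - t)) ∂(gaussianReal 0 v).map (fun x ↦ -x) := by
        simpa using (lintegral_map_equiv (fun t => gaussianReal 0 1 (Set.Iic (a - t)))
          (MeasurableEquiv.neg ℝ)).symm
    _ = (gaussianReal 0 v ∗ gaussianReal 0 1) (Set.Iic a) := by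
        rw [gaussianReal_map_neg, neg_zero, Measure.conv,
          Measure.map_apply measurable_add measurableSet_Iic,
          Measure.prod_apply (measurable_add measurableSet_Iic)]
        congr with t
        congr 1 with y
        simp [le_sub_iff_add_le']
    _ = gaussianReal 0 (1 + v) (Set.Iic a) := by
        rw [gaussianReal_conv_gaussianReal, add_zero, add_comm]

lemma integral_stdNormalCDF_add_gaussianReal (a : ℝ) (v : ℝ≥0) :
    ∫ t, stdNormalCDF (a + t) ∂gaussianReal 0 v = stdNormalCDF (a / Real.sqrt (1 + v)) := by
  have hmono : Monotone fun t => gaussianReal 0 1 (Set.Iic (a + t)) :=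
    fun s t hst => measure_mono (Set.Iic_subset_Iic.2 (by linarith))
  simp_rw [stdNormalCDF_eq_gaussianReal_real_Iic, measureReal_def]
  rw [integral_toReal hmono.measurable.aemeasurable (ae_of_all _ fun _ => measure_lt_top _ _),
    lintegral_gaussianReal_Iic_add]
  have hc : 0 < Real.sqrt (1 + v) := Real.sqrt_pos.2 (by positivity)
  have hscale : gaussianReal 0 (1 + v) = (gaussianReal 0 1).map (Real.sqrt (1 + v) * ·) := by
    rw [gaussianReal_map_const_mul, mul_zero, mul_one]
    congr
    ext
    simp only [NNReal.coe_mk, NNReal.coe_add, NNReal.coe_one]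
    rw [Real.sq_sqrt (by positivity)]
  rw [hscale, Measure.map_apply (by fun_prop) measurableSet_Iic]
  congr with x
  simp [le_div_iff₀ hc, mul_comm]

lemma integral_stdNormalCDF_add_dotProduct_pi_gaussianReal {ι : Type*} [Fintype ι] (a : ℝ)
    (v : ι → ℝ) :
    ∫ z, stdNormalCDF (a + v ⬝ᵥ z) ∂Measure.pi (fun _ : ι => gaussianReal 0 1) =
      stdNormalCDF (a / Real.sqrt (1 + v ⬝ᵥ v)) := by
  have hmeas : Measurable fun t => stdNormalCDF (a + t) :=
    (stdNormalCDF_monotone.comp (monotone_id.const_add a)).measurable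
  rw [← integral_map (by fun_prop) hmeas.aestronglyMeasurable,
    map_dotProduct_pi_gaussianReal, integral_stdNormalCDF_add_gaussianReal,
    Real.coe_toNNReal (v ⬝ᵥ v) (Finset.sum_nonneg fun i _ => mul_self_nonneg (v i))]

lemma integral_comp_mulVec {ι : Type*} [Fintype ι] [DecidableEq ι] {E : Type*}
    [NormedAddCommGroup E] [NormedSpace ℝ E] {S : Matrix ι ι ℝ} (hS : S.det ≠ 0)
    (g : (ι → ℝ) → E) :
    ∫ z, g (S *ᵥ z) = |S.det|⁻¹ • ∫ x, g x := by
  have hemb : MeasurableEmbedding (toLin' S) :=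
    (LinearMap.isClosedEmbedding_of_injective
      (LinearMap.ker_eq_bot.2 (mulVec_injective_of_det_ne_zero hS))).measurableEmbedding
  rw [← abs_inv, ← ENNReal.toReal_ofReal (abs_nonneg S.det⁻¹), ← integral_smul_measure,
    ← Real.map_matrix_volume_pi_eq_smul_volume_pi hS, hemb.integral_map]
  rfl

lemma mvNormalPDF_nonneg {p : ℕ} (μ : Fin p → ℝ) (Cov : Matrix (Fin p) (Fin p) ℝ)
    (x : Fin p → ℝ) : 0 ≤ mvNormalPDF μ Cov x := by
  unfold mvNormalPDF
  positivity

lemma mvNormalPDF_mulVec_add {p : ℕ} (μ z : Fin p → ℝ) {S : Matrix (Fin p) (Fin p) ℝ}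
    (hS : S.det ≠ 0) :
    mvNormalPDF μ (S * Sᵀ) (S *ᵥ z + μ) = |S.det|⁻¹ * ∏ i, stdNormalPDF (z i) := by
  have hquad : (S *ᵥ z) ⬝ᵥ ((S * Sᵀ)⁻¹ *ᵥ (S *ᵥ z)) = z ⬝ᵥ z := by
    rw [Matrix.mul_inv_rev, ← mulVec_mulVec, mulVec_mulVec z S⁻¹, nonsing_inv_mul _ hS.isUnit,
      one_mulVec, ← vecMul_transpose, ← dotProduct_mulVec, mulVec_mulVec,
      mul_nonsing_inv _ (by simpa using hS.isUnit), one_mulVec]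
  have hsqrt : Real.sqrt ((2 * Real.pi) ^ p * (S * Sᵀ).det) =
      Real.sqrt (2 * Real.pi) ^ p * |S.det| := by
    rw [det_mul, det_transpose, Real.sqrt_mul (by positivity), Real.sqrt_mul_self_eq_abs,
      ← Real.sqrt_sq (by positivity : 0 ≤ Real.sqrt (2 * Real.pi) ^ p), pow_right_comm,
      Real.sq_sqrt (by positivity)]
  rw [mvNormalPDF, add_sub_cancel_right, hquad, hsqrt, prod_stdNormalPDF, Fintype.card_fin,
    mul_inv]
  ring

lemma integral_mvNormalPDF_mul {p : ℕ} (μ : Fin p → ℝ) {S : Matrix (Fin p) (Fin p) ℝ}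
    (hS : S.det ≠ 0) (f : (Fin p → ℝ) → ℝ) :
    ∫ x, mvNormalPDF μ (S * Sᵀ) x * f x =
      ∫ z, f (S *ᵥ z + μ) ∂Measure.pi fun _ => gaussianReal 0 1 := by
  have hdensity : ∀ z, (∏ i, stdNormalPDF (z i)) • f (S *ᵥ z + μ) =
      |S.det| * (mvNormalPDF μ (S * Sᵀ) (S *ᵥ z + μ) * f (S *ᵥ z + μ)) := fun z => by
    rw [mvNormalPDF_mulVec_add μ z hS, smul_eq_mul, ← mul_assoc, ← mul_assoc,
      mul_inv_cancel₀ (by positivity), one_mul]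
  simp_rw [integral_pi_gaussianReal, hdensity]
  rw [integral_const_mul,
    integral_comp_mulVec hS (fun y => mvNormalPDF μ (S * Sᵀ) (y + μ) * f (y + μ)),
    integral_add_right_eq_self (fun x => mvNormalPDF μ (S * Sᵀ) x * f x), smul_eq_mul,
    ← mul_assoc, mul_inv_cancel₀ (by positivity), one_mul]

theorem msn_is_probability_density_general {p : ℕ} (μ lam : Fin p → ℝ) (lam0 : ℝ)
    (Cov S : Matrix (Fin p) (Fin p) ℝ) (hS : S.PosDef)
    (hSS : S * S = Cov) :
    (∀ x : Fin p → ℝ,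
        0 ≤ (stdNormalCDF (lam0 / Real.sqrt (1 + lam ⬝ᵥ lam)))⁻¹ * mvNormalPDF μ Cov x *
            stdNormalCDF (lam0 + lam ⬝ᵥ (S⁻¹ *ᵥ (x - μ)))) ∧
      ∫ x : Fin p → ℝ,
          (stdNormalCDF (lam0 / Real.sqrt (1 + lam ⬝ᵥ lam)))⁻¹ * mvNormalPDF μ Cov x *
            stdNormalCDF (lam0 + lam ⬝ᵥ (S⁻¹ *ᵥ (x - μ))) = 1 := by
  refine ⟨fun x => mul_nonneg (mul_nonneg (inv_nonneg.2 (stdNormalCDF_nonneg _))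
    (mvNormalPDF_nonneg μ Cov x)) (stdNormalCDF_nonneg _), ?_⟩
  have hdet : S.det ≠ 0 := hS.det_pos.ne'
  have hCov : Cov = S * Sᵀ := by
    rw [← hSS, ← conjTranspose_eq_transpose_of_trivial, hS.isHermitian]
  have hinv : ∀ z, S⁻¹ *ᵥ (S *ᵥ z + μ - μ) = z := fun z => by
    rw [add_sub_cancel_right, mulVec_mulVec, nonsing_inv_mul _ hdet.isUnit, one_mulVec]
  simp_rw [mul_assoc, integral_const_mul, hCov, integral_mvNormalPDF_mul μ hdet, hinv,
    integral_stdNormalCDF_add_dotProduct_pi_gaussianReal]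
  exact inv_mul_cancel₀ (stdNormalCDF_pos _).ne'

/-- The multivariate skew-normal density integrates to 1. Here `S` is the symmetric
positive-definite square root of `Cov`, so `S⁻¹ = Cov^{-1/2}`. -/
theorem msn_is_probability_density {p : ℕ} (μ lam : Fin p → ℝ) (lam0 : ℝ)
    (Cov S : Matrix (Fin p) (Fin p) ℝ) (hCov : Cov.PosDef) (hS : S.PosDef)
    (hSS : S * S = Cov) :
    (∀ x : Fin p → ℝ,
        0 ≤ (stdNormalCDF (lam0 / Real.sqrt (1 + lam ⬝ᵥ lam)))⁻¹ * mvNormalPDF μ Cov x *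
            stdNormalCDF (lam0 + lam ⬝ᵥ (S⁻¹ *ᵥ (x - μ)))) ∧
      ∫ x : Fin p → ℝ,
          (stdNormalCDF (lam0 / Real.sqrt (1 + lam ⬝ᵥ lam)))⁻¹ * mvNormalPDF μ Cov x *
            stdNormalCDF (lam0 + lam ⬝ᵥ (S⁻¹ *ᵥ (x - μ))) = 1 :=
  msn_is_probability_density_general μ lam lam0 Cov S hS hSS
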